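/- A simplicial complex $X \subseteq \binom{[n]}{k}$ is a matroid if and only if its barycentric subdivision $\mathcal{B}(X) := \{(x_{\sigma(1)}, \ldots, x_{\sigma(k)}) : \{x_1, \ldots, x_k\} \in X, \sigma \in S_k\} \subseteq \mathrm{Conf}_k([n])$ is a Coxeter matroid for the symmetric group $S_n$ with respect to the parabolic quotient $S_n^{[n-1] \setminus [k]}$. -/

import Mathlib

/-- The Gale (Bruhat) order on finite subsets of a linear order:
componentwise comparison of the increasing enumerations. -/
def GaleLE {α : Type*} [LinearOrder α] (x y : Finset α) : Prop :=
  ∀ i (hx : i < (x.sort (· ≤ ·)).length) (hy : i < (y.sort (· ≤ ·)).length),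
    (x.sort (· ≤ ·)).get ⟨i, hx⟩ ≤ (y.sort (· ≤ ·)).get ⟨i, hy⟩

/-- `P^{(i)}(y)`: the set of the first `i` entries of the tuple `y`. -/
def Pset {n k : ℕ} (y : Fin k → Fin n) (i : ℕ) : Finset (Fin n) :=
  (Finset.univ.filter (fun j : Fin k => (j : ℕ) < i)).image y

/-- The Bruhat order on `Conf_k([n])`, the injective `k`-tuples from `[n]`
(identified with the parabolic quotient `S_n^{[n-1]∖[k]}`): `x ≤ y` iff
`P^{(i)}(x) ≤ P^{(i)}(y)` in the Gale order for all `i ∈ [k]`. -/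
def BruhatLE {n k : ℕ} (x y : Fin k → Fin n) : Prop :=
  ∀ i, 1 ≤ i → i ≤ k → GaleLE (Pset x i) (Pset y i)

/-- `Y ⊆ Conf_k([n]) ≃ S_n^{[n-1]∖[k]}` is a Coxeter matroid if for every
`w ∈ S_n` the set `{P^J(w·y) : y ∈ Y}` (i.e. `{w ∘ y : y ∈ Y}` under the
identification) has a unique maximum in the Bruhat order. -/
def IsCoxeterMatroid {n k : ℕ} (Y : Set (Fin k → Fin n)) : Prop :=
  ∀ w : Equiv.Perm (Fin n),
    ∃! m, m ∈ (fun y => w ∘ y) '' Y ∧ ∀ z ∈ (fun y => w ∘ y) '' Y, BruhatLE z m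

/-- The basis exchange property. -/
def ExchangeProp {n : ℕ} (X : Set (Finset (Fin n))) : Prop :=
  ∀ A ∈ X, ∀ B ∈ X, ∀ a ∈ A \ B, ∃ b ∈ B \ A, (A \ {a}) ∪ {b} ∈ X

/-- The barycentric subdivision `𝓑(X) ⊆ Conf_k([n])` of a pure simplicial
complex `X` of `k`-subsets of `[n]`: all injective `k`-tuples whose underlying
set is a facet of `X`, i.e. all reorderings of the facets. -/
def Bary {n : ℕ} (k : ℕ) (X : Set (Finset (Fin n))) : Set (Fin k → Fin n) :=
  {y | Function.Injective y ∧ Finset.image y Finset.univ ∈ X}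


/-!
The Gale order on `k`-sets compares the counts `#{x ∈ P | t ≤ x}` for all thresholds `t`, and the
Bruhat order on injective tuples is the Gale order on every initial segment. For a fixed `w`, the
set `w ∘ 𝓑(X)` therefore has a Bruhat maximum exactly when `w(X)` has a Gale maximum `w(B)`: the
decreasing arrangement of `w(B)` has `min i #{x ∈ w(B) | t ≤ x}` entries `≥ t` among its first `i`,
the most any arrangement of a facet can have.

For a matroid, a basis `B` of maximal weight `∑ x ∈ B, w x` is Gale-maximal after `w`, by
induction on `#(A \ B)` using basis exchange. Conversely, choose `w` so that `A \ {a}` and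
`A \ {a} ∪ B` both become upper sets; the Gale-maximal facet `M` then contains `A \ {a}` and lies
in `A \ {a} ∪ B`, so `M = A \ {a} ∪ {b}` with `b ∈ B \ A`.
-/

open Finset

lemma card_filter_image_of_injective {ι β : Type*} [DecidableEq β] {f : ι → β}
    (hf : Function.Injective f) (s : Finset ι) (p : β → Prop) [DecidablePred p] :
    #{y ∈ s.image f | p y} = #{i ∈ s | p (f i)} := by
  rw [filter_image, card_image_of_injective _ hf]

section Gale

variable {α : Type*} [LinearOrder α]

def Finset.sortDesc (P : Finset α) {k : ℕ} (h : #P = k) : Fin k → α :=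
  P.orderEmbOfFin h ∘ Fin.rev

lemma Finset.sortDesc_injective (P : Finset α) {k : ℕ} (h : #P = k) :
    Function.Injective (P.sortDesc h) :=
  (P.orderEmbOfFin h).injective.comp Fin.rev_injective

lemma Finset.sortDesc_antitone (P : Finset α) {k : ℕ} (h : #P = k) :
    Antitone (P.sortDesc h) :=
  fun _ _ hij => (P.orderEmbOfFin h).monotone (Fin.rev_le_rev.mpr hij)

lemma Finset.image_sortDesc_univ (P : Finset α) {k : ℕ} (h : #P = k) :
    univ.image (P.sortDesc h) = P := by
  rw [Finset.sortDesc, ← image_image, image_univ_of_surjective Fin.rev_surjective,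
    image_orderEmbOfFin_univ]

lemma Finset.card_filter_sortDesc (P : Finset α) {k : ℕ} (h : #P = k)
    (p : α → Prop) [DecidablePred p] :
    #{j | p (P.sortDesc h j)} = #{x ∈ P | p x} := by
  conv_rhs => rw [← P.image_sortDesc_univ h]
  rw [card_filter_image_of_injective (P.sortDesc_injective h)]

lemma Finset.le_sortDesc_iff (P : Finset α) {k : ℕ} (h : #P = k) (t : α) (j : Fin k) :
    t ≤ P.sortDesc h j ↔ j < #{x ∈ P | t ≤ x} := by
  rw [← P.card_filter_sortDesc h]
  exact (Fin.lt_card_filter_univ_iff_apply_of_imp (fun i => t ≤ P.sortDesc h i)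
    fun _ _ hji (ht : t ≤ _) => ht.trans (P.sortDesc_antitone h hji)).symm

lemma galeLE_iff_forall_sortDesc_le {P Q : Finset α} {k : ℕ} (hP : #P = k) (hQ : #Q = k) :
    GaleLE P Q ↔ ∀ j, P.sortDesc hP j ≤ Q.sortDesc hQ j := by
  have : GaleLE P Q ↔ ∀ j, P.orderEmbOfFin hP j ≤ Q.orderEmbOfFin hQ j := by
    simp only [GaleLE, orderEmbOfFin_apply, List.get_eq_getElem, length_sort, hP, hQ]
    exact ⟨fun h j => h j j.2 j.2, fun h i hi _ => h ⟨i, hi⟩⟩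
  rw [this, Fin.rev_surjective.forall]
  rfl

theorem galeLE_iff_card_filter_le {P Q : Finset α} (hPQ : #P = #Q) :
    GaleLE P Q ↔ ∀ t, #{x ∈ P | t ≤ x} ≤ #{x ∈ Q | t ≤ x} := by
  rw [galeLE_iff_forall_sortDesc_le rfl hPQ.symm]
  constructor
  · intro h t
    rw [← P.card_filter_sortDesc rfl, ← Q.card_filter_sortDesc hPQ.symm]
    refine card_le_card fun j => ?_
    simp only [mem_filter, mem_univ, true_and]
    exact fun ht => ht.trans (h j)
  · intro h j
    rw [Q.le_sortDesc_iff]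
    exact ((P.le_sortDesc_iff rfl _ j).mp le_rfl).trans_le (h _)

lemma galeLE_antisymm {P Q : Finset α} (hPQ : #P = #Q) (h₁ : GaleLE P Q) (h₂ : GaleLE Q P) :
    P = Q := by
  have hl : P.sort (· ≤ ·) = Q.sort (· ≤ ·) :=
    List.ext_get (by simp [hPQ]) fun i h h' => le_antisymm (h₁ i h h') (h₂ i h' h)
  simpa using congrArg List.toFinset hl

theorem GaleLE.card_inter_le {P Q U : Finset α} (h : GaleLE P Q) (hPQ : #P = #Q)
    (hU : IsUpperSet (U : Set α)) : #(P ∩ U) ≤ #(Q ∩ U) := by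
  obtain hPU | hPU := (P ∩ U).eq_empty_or_nonempty
  · simp [hPU]
  set t := (P ∩ U).min' hPU
  have htU : t ∈ U := (mem_inter.mp ((P ∩ U).min'_mem hPU)).2
  have hP : P ∩ U = {x ∈ P | t ≤ x} := by
    ext x
    simp only [mem_inter, mem_filter]
    exact ⟨fun hx => ⟨hx.1, (P ∩ U).min'_le x (mem_inter.mpr hx)⟩,
      fun hx => ⟨hx.1, hU hx.2 htU⟩⟩
  have hQ : {x ∈ Q | t ≤ x} ⊆ Q ∩ U := fun x hx => by
    rw [mem_filter] at hx
    exact mem_inter.mpr ⟨hx.1, hU hx.2 htU⟩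
  rw [hP]
  exact ((galeLE_iff_card_filter_le hPQ).mp h t).trans (card_le_card hQ)

end Gale

section Tuples

variable {n k : ℕ}

lemma Pset_card {y : Fin k → Fin n} (hy : Function.Injective y) {i : ℕ} (hi : i ≤ k) :
    #(Pset y i) = i := by
  rw [Pset, card_image_of_injective _ hy, Fin.card_filter_val_lt, min_eq_right hi]

lemma Pset_self (y : Fin k → Fin n) : Pset y k = univ.image y := by
  rw [Pset, filter_true_of_mem fun j _ => j.2]

lemma card_filter_Pset_le {y : Fin k → Fin n} (hy : Function.Injective y) (t : Fin n)
    {i : ℕ} (hi : i ≤ k) :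
    #{x ∈ Pset y i | t ≤ x} ≤ min i #{x ∈ univ.image y | t ≤ x} :=
  le_min ((card_filter_le _ _).trans (Pset_card hy hi).le)
    (card_le_card (filter_subset_filter _ (image_subset_image (filter_subset _ _))))

lemma card_filter_Pset_sortDesc {C : Finset (Fin n)} (hC : #C = k) (t : Fin n)
    {i : ℕ} (hi : i ≤ k) :
    #{x ∈ Pset (C.sortDesc hC) i | t ≤ x} = min i #{x ∈ C | t ≤ x} := by
  rw [Pset, card_filter_image_of_injective (C.sortDesc_injective hC), filter_filter]
  simp_rw [C.le_sortDesc_iff hC, ← lt_min_iff, Fin.card_filter_val_lt]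
  exact min_eq_right (min_le_of_left_le hi)

lemma mem_Pset {y : Fin k → Fin n} {i : ℕ} {a : Fin n} :
    a ∈ Pset y i ↔ ∃ j : Fin k, (j : ℕ) < i ∧ y j = a := by
  simp [Pset]

lemma eq_of_Pset_eq {x y : Fin k → Fin n} (hx : Function.Injective x)
    (h : ∀ i, 1 ≤ i → i ≤ k → Pset x i = Pset y i) : x = y := by
  funext j
  have hxj : x j ∈ Pset y (j + 1) := h _ (by omega) j.2 ▸ mem_Pset.mpr ⟨j, by omega, rfl⟩
  obtain ⟨j', hj', hyx⟩ := mem_Pset.mp hxj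
  obtain hlt | heq : (j' : ℕ) < j ∨ (j' : ℕ) = j := by omega
  · have hyj : y j' ∈ Pset x j := (h _ (by omega) j.2.le).symm ▸ mem_Pset.mpr ⟨j', hlt, rfl⟩
    obtain ⟨j'', hj'', hxy⟩ := mem_Pset.mp hyj
    have := congrArg Fin.val (hx (hxy.trans hyx))
    omega
  · rw [← hyx, Fin.ext heq]

theorem BruhatLE.antisymm {x y : Fin k → Fin n} (hx : Function.Injective x)
    (hy : Function.Injective y) (hxy : BruhatLE x y) (hyx : BruhatLE y x) : x = y :=
  eq_of_Pset_eq hx fun i hi hik => galeLE_antisymm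
    (by rw [Pset_card hx hik, Pset_card hy hik]) (hxy i hi hik) (hyx i hi hik)

theorem bruhatLE_sortDesc {z : Fin k → Fin n} (hz : Function.Injective z) {C : Finset (Fin n)}
    (hC : #C = k) (h : GaleLE (univ.image z) C) : BruhatLE z (C.sortDesc hC) := by
  have hzC : #(univ.image z) = #C := by simp [card_image_of_injective _ hz, hC]
  intro i _ hi
  rw [galeLE_iff_card_filter_le (by rw [Pset_card hz hi, Pset_card (C.sortDesc_injective hC) hi])]
  intro t
  rw [card_filter_Pset_sortDesc hC t hi]
  exact (card_filter_Pset_le hz t hi).trans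
    (min_le_min_left _ ((galeLE_iff_card_filter_le hzC).mp h t))

end Tuples

section Matroid

variable {n k : ℕ} {X : Set (Finset (Fin n))}

def HasGaleMax (X : Set (Finset (Fin n))) (w : Equiv.Perm (Fin n)) : Prop :=
  ∃ B ∈ X, ∀ A ∈ X, GaleLE (A.image w) (B.image w)

theorem isCoxeterMatroid_bary_of_hasGaleMax (hX : ∀ x ∈ X, #x = k)
    (h : ∀ w, HasGaleMax X w) : IsCoxeterMatroid (Bary k X) := by
  intro w
  obtain ⟨B, hB, hmax⟩ := h w
  have hC : #(B.image w) = k := by rw [card_image_of_injective _ w.injective, hX B hB]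
  set m := (B.image w).sortDesc hC
  have hm : m ∈ (fun y => w ∘ y) '' Bary k X := by
    refine ⟨w.symm ∘ m, ⟨w.symm.injective.comp (sortDesc_injective _ hC), ?_⟩, ?_⟩
    · rwa [← image_image, image_sortDesc_univ, image_image, w.symm_comp_self, image_id]
    · ext; simp
  have hdom : ∀ z ∈ (fun y => w ∘ y) '' Bary k X, BruhatLE z m := by
    rintro _ ⟨y, ⟨hy, hyX⟩, rfl⟩
    refine bruhatLE_sortDesc (w.injective.comp hy) hC ?_
    rw [← image_image]
    exact hmax _ hyX
  refine ⟨m, ⟨hm, hdom⟩, fun m' ⟨hm', hdom'⟩ => ?_⟩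
  obtain ⟨y, ⟨hy, hyX⟩, rfl⟩ := hm'
  exact BruhatLE.antisymm (w.injective.comp hy) (sortDesc_injective _ hC)
    (hdom _ ⟨y, ⟨hy, hyX⟩, rfl⟩) (hdom' m hm)

theorem hasGaleMax_of_isCoxeterMatroid (hX : ∀ x ∈ X, #x = k)
    (hC : IsCoxeterMatroid (Bary k X)) (w : Equiv.Perm (Fin n)) : HasGaleMax X w := by
  obtain ⟨_, ⟨⟨y, ⟨-, hyX⟩, rfl⟩, hdom⟩, -⟩ := hC w
  refine ⟨univ.image y, hyX, fun A hA => ?_⟩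
  obtain rfl | hk := Nat.eq_zero_or_pos k
  · rw [card_eq_zero.mp (hX A hA), card_eq_zero.mp (hX _ hyX)]
    exact fun _ _ _ => le_rfl
  · have hA' : ⇑(A.orderEmbOfFin (hX A hA)) ∈ Bary k X :=
      ⟨(A.orderEmbOfFin _).injective, by rwa [image_orderEmbOfFin_univ]⟩
    have := hdom _ ⟨_, hA', rfl⟩ k hk le_rfl
    rwa [Pset_self, Pset_self, ← image_image, ← image_image, image_orderEmbOfFin_univ] at this

theorem ExchangeProp.card_filter_le_of_max_weight (hE : ExchangeProp X) (hX : ∀ x ∈ X, #x = k)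
    {B : Finset (Fin n)} (hB : B ∈ X) {f : Fin n → ℕ}
    (hmax : ∀ A ∈ X, ∑ x ∈ A, f x ≤ ∑ x ∈ B, f x) {p : Fin n → Prop} [DecidablePred p]
    (hp : ∀ x y, ¬ p x → p y → f x < f y) {A : Finset (Fin n)} (hA : A ∈ X) :
    #{x ∈ A | p x} ≤ #{x ∈ B | p x} := by
  induction hd : #(A \ B) using Nat.strong_induction_on generalizing A with
  | _ d ih =>
  by_cases hlow : ∃ a ∈ A \ B, ¬ p a
  · obtain ⟨a, ha, hpa⟩ := hlow
    obtain ⟨b, hb, hA'⟩ := hE A hA B hB a ha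
    have hcloser : #((A \ {a} ∪ {b}) \ B) < d := by
      rw [← hd]
      refine card_lt_card ⟨fun x hx => ?_, fun hsub => ?_⟩
      · simp only [mem_sdiff, mem_union, mem_singleton] at hx hb ⊢
        grind
      · have := hsub ha
        simp only [mem_sdiff, mem_union, mem_singleton] at this ha hb
        grind
    calc #{x ∈ A | p x} ≤ #{x ∈ A \ {a} ∪ {b} | p x} := by
          refine card_le_card fun x hx => ?_
          simp only [mem_filter, mem_union, mem_sdiff, mem_singleton] at hx ⊢
          grind
      _ ≤ #{x ∈ B | p x} := ih _ hcloser hA' rfl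
  push Not at hlow
  -- Swapping a light `b ∈ B \ A` for some `a ∈ A \ B`, which satisfies `p`, would make `B` heavier.
  by_cases hhigh : ∃ b ∈ B \ A, ¬ p b
  · obtain ⟨b, hb, hpb⟩ := hhigh
    obtain ⟨a, ha, hB'⟩ := hE B hB A hA b hb
    have hswap : ∑ x ∈ B \ {b} ∪ {a}, f x + f b = ∑ x ∈ B, f x + f a := by
      rw [sum_union (disjoint_singleton_right.mpr (by simp [(mem_sdiff.mp ha).2])),
        sum_singleton, add_right_comm, sdiff_singleton_eq_erase,
        sum_erase_add _ _ (mem_sdiff.mp hb).1]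
    have := hmax _ hB'
    have := hp b a hpb (hlow a ha)
    omega
  push Not at hhigh
  have hnot : {x ∈ A | ¬ p x} = {x ∈ B | ¬ p x} := by
    ext x
    simp only [mem_filter, mem_sdiff] at hlow hhigh ⊢
    grind
  have hsplitA := card_filter_add_card_filter_not (s := A) (fun x => p x)
  have hsplitB := card_filter_add_card_filter_not (s := B) (fun x => p x)
  rw [hnot, hX A hA] at hsplitA
  rw [hX B hB] at hsplitB
  omega

theorem hasGaleMax_of_exchangeProp (hX : ∀ x ∈ X, #x = k) (hne : X.Nonempty)
    (hE : ExchangeProp X) (w : Equiv.Perm (Fin n)) : HasGaleMax X w := by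
  obtain ⟨B, hB, hmax⟩ := X.exists_max_image (fun A => ∑ x ∈ A, (w x : ℕ)) X.toFinite hne
  refine ⟨B, hB, fun A hA => ?_⟩
  rw [galeLE_iff_card_filter_le (by simp [card_image_of_injective _ w.injective, hX A hA, hX B hB])]
  intro t
  rw [card_filter_image_of_injective w.injective, card_filter_image_of_injective w.injective]
  exact hE.card_filter_le_of_max_weight hX hB hmax
    (fun x y hx hy => (lt_of_not_ge hx).trans_le hy) hA

lemma exists_perm_lt_of_lt {β : Type*} [LinearOrder β] (c : Fin n → β) :
    ∃ w : Equiv.Perm (Fin n), ∀ x y, c x < c y → w x < w y :=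
  ⟨(Tuple.sort c).symm, fun x y hxy => lt_of_not_ge fun hyx =>
    hxy.not_ge (by simpa using Tuple.monotone_sort c hyx)⟩

lemma exists_perm_isUpperSet_image {U V : Finset (Fin n)} (hUV : U ⊆ V) :
    ∃ w : Equiv.Perm (Fin n),
      IsUpperSet (U.image w : Set (Fin n)) ∧ IsUpperSet (V.image w : Set (Fin n)) := by
  let c : Fin n → ℕ := fun x => (if x ∈ U then 1 else 0) + (if x ∈ V then 1 else 0)
  obtain ⟨w, hw⟩ := exists_perm_lt_of_lt c
  have hupper : ∀ S : Finset (Fin n), (∀ x ∈ S, ∀ y ∉ S, c y < c x) →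
      IsUpperSet (S.image w : Set (Fin n)) := by
    intro S hS a b hab ha
    rw [coe_image] at ha ⊢
    obtain ⟨x, hx, rfl⟩ := ha
    refine ⟨w.symm b, of_not_not fun hb => ?_, w.apply_symm_apply b⟩
    have := hw _ _ (hS x hx _ hb)
    rw [w.apply_symm_apply] at this
    exact this.not_ge hab
  refine ⟨w, hupper U fun x hx y hy => ?_, hupper V fun x hx y hy => ?_⟩
  · have := hUV hx
    simp only [c]
    split_ifs <;> simp_all
  · have : y ∉ U := fun h => hy (hUV h)
    simp only [c]
    split_ifs <;> simp_all

theorem exchangeProp_of_hasGaleMax (hX : ∀ x ∈ X, #x = k) (h : ∀ w, HasGaleMax X w) :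
    ExchangeProp X := by
  intro A hA B hB a ha
  rw [mem_sdiff] at ha
  set U := A \ {a}
  obtain ⟨w, hU, hUB⟩ := exists_perm_isUpperSet_image (subset_union_left : U ⊆ U ∪ B)
  obtain ⟨M, hM, hmax⟩ := h w
  have hle : ∀ S ∈ X, ∀ V : Finset (Fin n), IsUpperSet (V.image w : Set (Fin n)) →
      #(S ∩ V) ≤ #(M ∩ V) := by
    intro S hS V hV
    have := (hmax S hS).card_inter_le
      (by simp [card_image_of_injective _ w.injective, hX S hS, hX M hM]) hV
    rwa [← image_inter _ _ w.injective, ← image_inter _ _ w.injective,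
      card_image_of_injective _ w.injective, card_image_of_injective _ w.injective] at this
  have hUM : U ⊆ M := by
    have := hle A hA U hU
    rw [inter_eq_right.mpr sdiff_subset] at this
    exact inter_eq_right.mp (eq_of_subset_of_card_le inter_subset_right this)
  have hMUB : M ⊆ U ∪ B := by
    have := hle B hB (U ∪ B) hUB
    rw [inter_eq_left.mpr subset_union_right, hX B hB, ← hX M hM] at this
    exact inter_eq_left.mp (eq_of_subset_of_card_le inter_subset_left this)
  obtain ⟨b, hb⟩ : ∃ b, M \ U = {b} := by
    refine card_eq_one.mp ?_
    have hUk : #U + 1 = k := by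
      rw [show U = A.erase a from sdiff_singleton_eq_erase a A, card_erase_add_one ha.1, hX A hA]
    rw [card_sdiff_of_subset hUM, hX M hM]
    omega
  have hbMU : b ∈ M \ U := hb ▸ mem_singleton_self b
  refine ⟨b, ?_, ?_⟩
  · have := hMUB (mem_sdiff.mp hbMU).1
    simp only [U, mem_sdiff, mem_union, mem_singleton] at hbMU this ⊢
    grind
  · rw [← hb, union_sdiff_of_subset hUM]
    exact hM

end Matroid

theorem matroid_iff_bary_coxeterMatroid_general
    (n k : ℕ) (X : Set (Finset (Fin n)))
    (hne : X.Nonempty) (hX : ∀ x ∈ X, x.card = k) :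
    ExchangeProp X ↔ IsCoxeterMatroid (Bary k X) :=
  ⟨fun hE => isCoxeterMatroid_bary_of_hasGaleMax hX (hasGaleMax_of_exchangeProp hX hne hE),
    fun hC => exchangeProp_of_hasGaleMax hX (hasGaleMax_of_isCoxeterMatroid hX hC)⟩

/-- A nonempty collection `X` of `k`-subsets of `[n]` is a matroid if and only
if its barycentric subdivision `𝓑(X)` is a Coxeter matroid in the parabolic
quotient `S_n^{[n-1]∖[k]}`. -/
theorem matroid_iff_bary_coxeterMatroid
    (n k : ℕ) (hk : k ≤ n) (X : Set (Finset (Fin n)))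
    (hne : X.Nonempty) (hX : ∀ x ∈ X, x.card = k) :
    ExchangeProp X ↔ IsCoxeterMatroid (Bary k X) :=
  matroid_iff_bary_coxeterMatroid_general n k X hne hX
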